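/- arXiv:1206.3328 — 3 statements merged into one kernel-verified Lean document; each statement's English description precedes it below -/
import Mathlib

section
/- There exists a constant C > 0 such that for all r ≥ 0 and all τ ∈ (0,1], ∫₀^τ (sin(s r)/r)² ds ≥ C · τ³ / (1 + τ² r²), where for r = 0 the integrand is interpreted as s². In particular ∫₀^τ (sin(s r)/r)² ds ≥ C τ³ / (1 + r²). -/
open Real Set

/-- Time-integral lower bound for the Fourier transform of the wave fundamental solution:
`∫₀^τ (sin(s r)/r)² ds ≥ C τ³ / (1 + τ² r²) ≥ C τ³/(1 + r²)` for `τ ∈ (0,1]`, `r ≥ 0`,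
where the integrand is `s²` when `r = 0`. -/
theorem wave_time_integral_lower_bound :
    ∃ C : ℝ, 0 < C ∧ ∀ r τ : ℝ, 0 ≤ r → τ ∈ Set.Ioc (0 : ℝ) 1 →
      C * τ ^ 3 / (1 + τ ^ 2 * r ^ 2) ≤
        (∫ s in (0 : ℝ)..τ, if r = 0 then s ^ 2 else (Real.sin (s * r) / r) ^ 2) ∧
      C * τ ^ 3 / (1 + r ^ 2) ≤ C * τ ^ 3 / (1 + τ ^ 2 * r ^ 2) := by
  refine ⟨1/20, by norm_num, fun r τ hr hτ => ?_⟩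
  obtain ⟨hτ0, hτ1⟩ := hτ
  have hden : (0:ℝ) < 1 + τ ^ 2 * r ^ 2 := by positivity
  constructor
  · by_cases hr0 : r = 0
    · subst hr0
      have : ∫ s in (0:ℝ)..τ, (if (0:ℝ) = 0 then s ^ 2 else (Real.sin (s * 0) / 0) ^ 2)
          = ∫ s in (0:ℝ)..τ, s ^ 2 := by
        simp
      rw [this, integral_pow]
      rw [div_le_iff₀ (by positivity)]
      nlinarith [pow_pos hτ0 3]
    · have hrpos : 0 < r := hr.lt_of_ne' hr0
      simp only [if_neg hr0]
      by_cases hcase : τ * r ≤ 1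
      · -- small case: use Jordan's inequality pointwise
        have hpi : (2:ℝ) ≤ π := by linarith [Real.pi_gt_three]
        have hpoint : ∀ s ∈ Icc (0:ℝ) τ, s ^ 2 / 4 ≤ (Real.sin (s * r) / r) ^ 2 := by
          intro s hs
          have hs0 : 0 ≤ s := hs.1
          have hsr : s * r ≤ 1 := le_trans (by nlinarith [hs.2]) hcase
          have hsr2 : s * r ≤ π / 2 := by linarith
          have hjord := Real.mul_le_sin (mul_nonneg hs0 hr) hsr2
          have h1 : s / 2 ≤ Real.sin (s * r) / r := by
            have hinv : (1/2 : ℝ) ≤ 2 / π := by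
              rw [div_le_div_iff₀ (by norm_num) (by positivity)]
              linarith [Real.pi_le_four]
            have h2 : (1/2 : ℝ) * (s * r) ≤ 2 / π * (s * r) :=
              mul_le_mul_of_nonneg_right hinv (mul_nonneg hs0 hr)
            rw [div_le_div_iff₀ (by norm_num) hrpos]
            linarith
          calc s ^ 2 / 4 = (s / 2) ^ 2 := by ring
            _ ≤ (Real.sin (s * r) / r) ^ 2 := by
                apply pow_le_pow_left₀ (by positivity) h1
        have hint : ∫ s in (0:ℝ)..τ, s ^ 2 / 4 ≤ ∫ s in (0:ℝ)..τ, (Real.sin (s * r) / r) ^ 2 := by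
          apply intervalIntegral.integral_mono_on hτ0.le _ _ hpoint
          · exact ((continuous_pow 2).div_const 4).intervalIntegrable 0 τ
          · exact (((Real.continuous_sin.comp (continuous_id.mul continuous_const)).div_const
              r).pow 2).intervalIntegrable 0 τ
        have hval : ∫ s in (0:ℝ)..τ, s ^ 2 / 4 = τ ^ 3 / 12 := by
          rw [intervalIntegral.integral_div, integral_pow]
          ring
        rw [hval] at hint
        refine le_trans ?_ hint
        rw [div_le_iff₀ hden]
        nlinarith [pow_pos hτ0 3, sq_nonneg (τ * r)]
      · -- large case: exact computation
        push_neg at hcase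
        have hτr : 1 < τ * r := hcase
        have hcomp : (∫ s in (0:ℝ)..τ, (Real.sin (s * r) / r) ^ 2)
            = (∫ s in (0:ℝ)..τ, Real.sin (s * r) ^ 2) / r ^ 2 := by
          simp_rw [div_pow]
          exact intervalIntegral.integral_div (r^2) _
        have hsub : (∫ s in (0:ℝ)..τ, Real.sin (s * r) ^ 2)
            = r⁻¹ * ∫ u in (0:ℝ)..(τ * r), Real.sin u ^ 2 := by
          have := intervalIntegral.integral_comp_mul_right (a := 0) (b := τ)
            (fun u => Real.sin u ^ 2) hr0
          simpa [smul_eq_mul] using this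
        rw [hcomp, hsub, integral_sin_sq]
        have hsc : Real.sin (τ * r) * Real.cos (τ * r) ≤ 1/2 := by
          nlinarith [Real.sin_sq_add_cos_sq (τ * r), sq_nonneg (Real.sin (τ*r) - Real.cos (τ*r))]
        have hlow : τ / 4 ≤ r⁻¹ * ((Real.sin 0 * Real.cos 0 - Real.sin (τ*r) * Real.cos (τ*r) + τ * r - 0) / 2) := by
          rw [Real.sin_zero]
          rw [le_inv_mul_iff₀ hrpos]
          have : τ * r / 2 - 1/4 ≤ (0 * Real.cos 0 - Real.sin (τ*r) * Real.cos (τ*r) + τ * r - 0) / 2 := by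
            linarith
          refine le_trans ?_ this
          have heq : r * (τ / 4) = τ * r / 4 := by ring
          linarith
        calc 1/20 * τ ^ 3 / (1 + τ ^ 2 * r ^ 2) ≤ (τ / 4) / r ^ 2 := by
              rw [div_le_div_iff₀ hden (by positivity)]
              nlinarith [mul_nonneg (pow_nonneg hτ0.le 3) (sq_nonneg r), hτ0.le]
          _ ≤ _ := by gcongr
  · have hτ2 : τ ^ 2 ≤ 1 := by nlinarith
    gcongr
    nlinarith [mul_nonneg (sq_nonneg r) (sub_nonneg.2 hτ2)]
end

section
/- Let μ be a nonzero non-negative measure on ℝ^d with ∫_{ℝ^d} (1+|ξ|²)^{-1} μ(dξ) < ∞. Then there exists C > 0 such that for all τ ∈ (0,1], Φ(τ) := ∫₀^τ ∫_{ℝ^d} (sin(s|ξ|)/|ξ|)² μ(dξ) ds ≥ C τ³. That is, the lower bound Φ(τ) ≥ C τ^γ holds for the stochastic wave equation with γ = 3. -/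
open scoped Classical

open Real Set MeasureTheory

set_option maxHeartbeats 1000000 in
/-- For the stochastic wave equation, under Dalang's condition the variance function
`Φ(τ) = ∫₀^τ ∫ (sin(s|ξ|)/|ξ|)² μ(dξ) ds` satisfies `Φ(τ) ≥ C τ³` for `τ ∈ (0,1]`
(i.e. γ = 3), provided `μ ≠ 0`; the integrand is interpreted as `s²` when `ξ = 0`. -/
theorem wave_Phi_lower_bound (d : ℕ)
    (μ : Measure (EuclideanSpace ℝ (Fin d))) (hμ : μ ≠ 0)
    (hDalang : ∫⁻ ξ, ENNReal.ofReal (1 / (1 + ‖ξ‖ ^ 2)) ∂μ < ⊤) :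
    ∃ C : ℝ, 0 < C ∧ ∀ τ ∈ Set.Ioc (0 : ℝ) 1,
      C * τ ^ 3 ≤ ∫ s in (0 : ℝ)..τ,
        (∫⁻ ξ, ENNReal.ofReal
          (if ξ = 0 then s ^ 2 else (Real.sin (s * ‖ξ‖) / ‖ξ‖) ^ 2) ∂μ).toReal := by
  have hπ : (0:ℝ) < π := Real.pi_pos
  have hπ3 : (3:ℝ) < π := Real.pi_gt_three
  -- joint measurability of the integrand
  have hmeasg : Measurable fun p : ℝ × EuclideanSpace ℝ (Fin d) =>
      ENNReal.ofReal (if p.2 = 0 then p.1 ^ 2 else (Real.sin (p.1 * ‖p.2‖) / ‖p.2‖) ^ 2) := by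
    apply Measurable.ennreal_ofReal
    apply Measurable.ite (measurable_snd (measurableSet_singleton 0))
    · exact (measurable_fst.pow_const 2)
    · apply Measurable.pow_const
      exact ((measurable_fst.mul measurable_snd.norm).sin).div measurable_snd.norm
  -- the measure of each closed ball is finite
  have hball : ∀ R : ℝ, 0 ≤ R → μ (Metric.closedBall 0 R) < ⊤ := by
    intro R hR
    have key : ENNReal.ofReal (1 / (1 + R ^ 2)) * μ (Metric.closedBall 0 R)
        ≤ ∫⁻ ξ, ENNReal.ofReal (1 / (1 + ‖ξ‖ ^ 2)) ∂μ := by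
      rw [← setLIntegral_const]
      refine le_trans (setLIntegral_mono (by measurability) ?_)
        (setLIntegral_le_lintegral _ _)
      intro ξ hξ
      apply ENNReal.ofReal_le_ofReal
      have hξR : ‖ξ‖ ≤ R := by
        simpa [Metric.mem_closedBall, dist_zero_right] using hξ
      have h1 : (0:ℝ) < 1 + ‖ξ‖ ^ 2 := by positivity
      have h2 : (1:ℝ) + ‖ξ‖ ^ 2 ≤ 1 + R ^ 2 := by nlinarith [norm_nonneg ξ]
      exact one_div_le_one_div_of_le h1 h2
    by_contra h
    rw [not_lt, top_le_iff] at h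
    have hc : ENNReal.ofReal (1 / (1 + R ^ 2)) ≠ 0 := by
      simp only [ne_eq, ENNReal.ofReal_eq_zero, not_le]
      positivity
    rw [h, ENNReal.mul_top hc] at key
    exact absurd (top_le_iff.mp key) hDalang.ne
  haveI : SigmaFinite μ :=
    ⟨⟨⟨fun n => Metric.closedBall 0 n, fun _ => mem_univ _,
      fun n => hball n (by positivity), Metric.iUnion_closedBall_nat 0⟩⟩⟩
  -- a ball with positive measure
  obtain ⟨n, hn⟩ : ∃ n : ℕ, μ (Metric.closedBall 0 n) ≠ 0 := by
    by_contra h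
    push_neg at h
    have h0 : μ Set.univ = 0 := by
      rw [← Metric.iUnion_closedBall_nat (0 : EuclideanSpace ℝ (Fin d))]
      exact measure_iUnion_null h
    exact hμ (Measure.measure_univ_eq_zero.mp h0)
  set R : ℝ := (n : ℝ) + 1 with hRdef
  have hR1 : (1:ℝ) ≤ R := by
    rw [hRdef]
    have : (0:ℝ) ≤ (n:ℝ) := Nat.cast_nonneg n
    linarith
  have hR0 : (0:ℝ) < R := by linarith
  set B := Metric.closedBall (0 : EuclideanSpace ℝ (Fin d)) R with hBdef
  have hBpos : 0 < μ B :=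
    lt_of_lt_of_le (pos_iff_ne_zero.mpr hn)
      (measure_mono (Metric.closedBall_subset_closedBall (by linarith)))
  have hBfin : μ B < ⊤ := hball R hR0.le
  set m := (μ B).toReal with hmdef
  have hm : 0 < m := ENNReal.toReal_pos hBpos.ne' hBfin.ne
  set a : ℝ := min 1 (π / (2 * R)) with hadef
  have ha0 : 0 < a := lt_min one_pos (by positivity)
  have ha1 : a ≤ 1 := min_le_left _ _
  have haR : a ≤ π / (2 * R) := min_le_right _ _
  set c' : ℝ := 4 / π ^ 2 with hc'def
  have hc'0 : 0 < c' := by positivity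
  have hc'1 : c' ≤ 1 := by
    rw [hc'def, div_le_one (by positivity)]
    nlinarith
  refine ⟨c' * m * a ^ 3 / 3, by positivity, ?_⟩
  intro τ hτ
  obtain ⟨hτ0, hτ1⟩ := hτ
  set F : ℝ → ENNReal := fun s => ∫⁻ ξ, ENNReal.ofReal
      (if ξ = 0 then s ^ 2 else (Real.sin (s * ‖ξ‖) / ‖ξ‖) ^ 2) ∂μ with hFdef
  have hFmeas : Measurable F := hmeasg.lintegral_prod_right'
  -- upper bound on F
  have hFle : ∀ s ∈ Icc (0:ℝ) 1, F s ≤ ENNReal.ofReal 2 * ∫⁻ ξ, ENNReal.ofReal (1 / (1 + ‖ξ‖ ^ 2)) ∂μ := by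
    intro s hs
    rw [hFdef, ← lintegral_const_mul' _ _ ENNReal.ofReal_ne_top]
    refine lintegral_mono fun ξ => ?_
    rw [← ENNReal.ofReal_mul (by norm_num)]
    apply ENNReal.ofReal_le_ofReal
    split_ifs with hξ
    · simp only [hξ, norm_zero]
      nlinarith [hs.1, hs.2]
    · have hx : (0:ℝ) < ‖ξ‖ := norm_pos_iff.mpr hξ
      have h1 : Real.sin (s * ‖ξ‖) ^ 2 ≤ (s * ‖ξ‖) ^ 2 := Real.sin_sq_le_sq
      have h2 : Real.sin (s * ‖ξ‖) ^ 2 ≤ 1 := Real.sin_sq_le_one _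
      rw [div_pow, mul_one_div, div_le_div_iff₀ (by positivity) (by positivity)]
      have h2' : Real.sin (s * ‖ξ‖) ^ 2 * ‖ξ‖ ^ 2 ≤ 1 * ‖ξ‖ ^ 2 :=
        mul_le_mul_of_nonneg_right h2 (sq_nonneg _)
      have h1' : Real.sin (s * ‖ξ‖) ^ 2 ≤ s ^ 2 * ‖ξ‖ ^ 2 := by
        calc Real.sin (s * ‖ξ‖) ^ 2 ≤ (s * ‖ξ‖) ^ 2 := h1
          _ = s ^ 2 * ‖ξ‖ ^ 2 := mul_pow s ‖ξ‖ 2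
      have hss : s ^ 2 * ‖ξ‖ ^ 2 ≤ 1 * ‖ξ‖ ^ 2 := by
        apply mul_le_mul_of_nonneg_right _ (sq_nonneg _)
        nlinarith [hs.1, hs.2]
      nlinarith [h1', h2', hss]
  have hMfin : ENNReal.ofReal 2 * (∫⁻ ξ, ENNReal.ofReal (1 / (1 + ‖ξ‖ ^ 2)) ∂μ) < ⊤ :=
    ENNReal.mul_lt_top ENNReal.ofReal_lt_top hDalang
  have hFtop : ∀ s ∈ Icc (0:ℝ) 1, F s ≠ ⊤ := fun s hs => ((hFle s hs).trans_lt hMfin).ne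
  -- interval integrability of toReal ∘ F on [0, b] for b ∈ [0,1]
  have hint : ∀ b ∈ Icc (0:ℝ) 1, IntervalIntegrable (fun s => (F s).toReal) volume 0 b := by
    intro b hb
    rw [intervalIntegrable_iff, Set.uIoc_of_le hb.1]
    refine ⟨(hFmeas.ennreal_toReal).aestronglyMeasurable.restrict, ?_⟩
    apply MeasureTheory.HasFiniteIntegral.of_bounded
      (C := (ENNReal.ofReal 2 * ∫⁻ ξ, ENNReal.ofReal (1 / (1 + ‖ξ‖ ^ 2)) ∂μ).toReal)
    filter_upwards [ae_restrict_mem measurableSet_Ioc] with s hs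
    rw [Real.norm_eq_abs, abs_of_nonneg ENNReal.toReal_nonneg]
    exact ENNReal.toReal_mono hMfin.ne (hFle s ⟨hs.1.le, hs.2.trans hb.2⟩)
  have haτ0 : 0 ≤ a * τ := by positivity
  have haτ1 : a * τ ≤ 1 := by nlinarith
  have haττ : a * τ ≤ τ := by nlinarith
  -- lower pointwise bound on [0, a*τ]
  have hlow : ∀ s ∈ Icc (0:ℝ) (a * τ), c' * m * s ^ 2 ≤ (F s).toReal := by
    intro s hs
    have hs0 : 0 ≤ s := hs.1
    have hsa : s ≤ a := hs.2.trans (by nlinarith)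
    have hs1 : s ≤ 1 := hsa.trans ha1
    have key : ENNReal.ofReal (c' * s ^ 2) * μ B ≤ F s := by
      rw [← setLIntegral_const, hFdef]
      refine le_trans (setLIntegral_mono (hmeasg.comp measurable_prodMk_left) ?_)
        (setLIntegral_le_lintegral _ _)
      intro ξ hξ
      apply ENNReal.ofReal_le_ofReal
      have hξR : ‖ξ‖ ≤ R := by
        simpa [hBdef, Metric.mem_closedBall, dist_zero_right] using hξ
      split_ifs with hξ0
      · nlinarith [sq_nonneg s, hc'1]
      · have hx : (0:ℝ) < ‖ξ‖ := norm_pos_iff.mpr hξ0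
        have hsx : s * ‖ξ‖ ≤ π / 2 := by
          calc s * ‖ξ‖ ≤ (π / (2 * R)) * R := by
                apply mul_le_mul (hsa.trans haR) hξR (norm_nonneg _) (by positivity)
            _ = π / 2 := by
                field_simp
        have hJ : 2 / π * (s * ‖ξ‖) ≤ Real.sin (s * ‖ξ‖) :=
          Real.mul_le_sin (by positivity) hsx
        have hdiv : 2 / π * s ≤ Real.sin (s * ‖ξ‖) / ‖ξ‖ := by
          rw [le_div_iff₀ hx]
          calc 2 / π * s * ‖ξ‖ = 2 / π * (s * ‖ξ‖) := by ring
            _ ≤ _ := hJ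
        have hnn : (0:ℝ) ≤ 2 / π * s := by positivity
        have hsq : (2 / π * s) ^ 2 ≤ (Real.sin (s * ‖ξ‖) / ‖ξ‖) ^ 2 :=
          pow_le_pow_left₀ hnn hdiv 2
        rw [hc'def]
        calc 4 / π ^ 2 * s ^ 2 = (2 / π * s) ^ 2 := by rw [mul_pow, div_pow]; ring
          _ ≤ _ := hsq
    calc c' * m * s ^ 2 = (ENNReal.ofReal (c' * s ^ 2) * μ B).toReal := by
          rw [ENNReal.toReal_mul, ENNReal.toReal_ofReal (by positivity), ← hmdef]; ring
      _ ≤ (F s).toReal := ENNReal.toReal_mono (hFtop s ⟨hs0, hs1⟩) key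
  -- put everything together
  have hpoly : IntervalIntegrable (fun s : ℝ => c' * m * s ^ 2) volume 0 (a * τ) :=
    ((continuous_const.mul (continuous_pow 2))).intervalIntegrable _ _
  have hint1 : IntervalIntegrable (fun s => (F s).toReal) volume 0 (a * τ) :=
    hint (a * τ) ⟨haτ0, haτ1⟩
  have hint2 : IntervalIntegrable (fun s => (F s).toReal) volume (a * τ) τ := by
    refine (hint τ ⟨hτ0.le, hτ1⟩).mono_set ?_
    rw [Set.uIcc_of_le haττ, Set.uIcc_of_le hτ0.le]
    exact Set.Icc_subset_Icc haτ0 le_rfl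
  calc c' * m * a ^ 3 / 3 * τ ^ 3
      = ∫ s in (0:ℝ)..(a * τ), c' * m * s ^ 2 := by
        rw [intervalIntegral.integral_const_mul, integral_pow]
        push_cast
        ring
    _ ≤ ∫ s in (0:ℝ)..(a * τ), (F s).toReal :=
        intervalIntegral.integral_mono_on haτ0 hpoly hint1 hlow
    _ ≤ ∫ s in (0:ℝ)..τ, (F s).toReal := by
        rw [← intervalIntegral.integral_add_adjacent_intervals hint1 hint2]
        have : 0 ≤ ∫ s in (a * τ)..τ, (F s).toReal :=
          intervalIntegral.integral_nonneg haττ fun s _ => ENNReal.toReal_nonneg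
        linarith
end

section
/- Let μ be a non-negative measure on ℝ^d. Then ∫₀^T ∫_{ℝ^d} (sin(t|ξ|)/|ξ|)² μ(dξ) dt < ∞ for some (equivalently, every) T > 0 if and only if ∫_{ℝ^d} (1+|ξ|²)^{-1} μ(dξ) < ∞, where the integrand is interpreted as t² when ξ = 0. -/
open scoped Classical

open Real Set MeasureTheory

/-!
Write `g(t, r) = sin²(tr)/r²`. Since `sin² x ≤ min(1, x²)`, `g(t, r) ≤ (1 + t²)/(1 + r²)`.
Conversely `∫₀ᵀ g(t, r) dt ≥ c_T/(1 + r²)`: for `Tr ≤ 1` because `sin x ≥ x/2` on `[0, 1]`, and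
for `Tr > 1` because `∫₀ᵀ sin²(tr) dt = (Tr - sin(Tr) cos(Tr))/(2r) ≥ T/4`. Integrating both bounds
in `ξ` with `r = |ξ|` makes `∫₀ᵀ∫ g dμ dt` and `∫ (1 + |ξ|²)⁻¹ dμ` comparable for every `T > 0`.
-/

/-- `|𝓕Γ(t)(ξ)|²` as a function of `r = |ξ|`, extended continuously to `r = 0`. -/
noncomputable def waveSymbolSq (t r : ℝ) : ℝ :=
  if r = 0 then t ^ 2 else (sin (t * r) / r) ^ 2

lemma waveSymbolSq_nonneg (t r : ℝ) : 0 ≤ waveSymbolSq t r := by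
  unfold waveSymbolSq; split_ifs <;> positivity

lemma waveSymbolSq_le_div (t r : ℝ) : waveSymbolSq t r ≤ (1 + t ^ 2) / (1 + r ^ 2) := by
  rw [le_div_iff₀ (by positivity), waveSymbolSq]
  split_ifs with hr
  · simp [hr]
  · have hr2 : 0 < r ^ 2 := by positivity
    have hsin : sin (t * r) ^ 2 / r ^ 2 ≤ t ^ 2 := by
      rw [div_le_iff₀ hr2, ← mul_pow]; exact sin_sq_le_sq
    calc (sin (t * r) / r) ^ 2 * (1 + r ^ 2) = sin (t * r) ^ 2 / r ^ 2 + sin (t * r) ^ 2 := by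
          field_simp
      _ ≤ t ^ 2 + 1 := add_le_add hsin (sin_sq_le_one _)
      _ = 1 + t ^ 2 := add_comm _ _

lemma sq_div_four_le_waveSymbolSq {t r : ℝ} (ht : 0 ≤ t) (hr : 0 ≤ r) (htr : t * r ≤ 1) :
    t ^ 2 / 4 ≤ waveSymbolSq t r := by
  rw [waveSymbolSq]
  split_ifs with hr0
  · linarith [sq_nonneg t]
  · have hr' : 0 < r := lt_of_le_of_ne hr (Ne.symm hr0)
    have hsin : t * r / 2 ≤ sin (t * r) := by
      have hjordan := mul_le_sin (mul_nonneg ht hr) (by linarith [pi_gt_three])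
      have hpi : 1 / 2 ≤ 2 / π := by
        rw [div_le_div_iff₀ (by norm_num) pi_pos]; linarith [pi_lt_four]
      nlinarith [mul_nonneg ht hr]
    rw [div_pow, le_div_iff₀ (by positivity)]
    nlinarith [pow_le_pow_left₀ (by positivity) hsin 2]

lemma continuous_waveSymbolSq_left (r : ℝ) : Continuous fun t => waveSymbolSq t r := by
  unfold waveSymbolSq
  split_ifs <;> fun_prop

lemma measurable_waveSymbolSq : Measurable (Function.uncurry waveSymbolSq) :=
  Measurable.ite (measurable_snd (measurableSet_singleton 0)) (by fun_prop) (by fun_prop)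

lemma integral_sin_mul_sq (T : ℝ) {r : ℝ} (hr : r ≠ 0) :
    ∫ t in 0..T, sin (t * r) ^ 2 = (T * r - sin (T * r) * cos (T * r)) / (2 * r) := by
  rw [intervalIntegral.integral_comp_mul_right (fun x => sin x ^ 2) hr, integral_sin_sq]
  simp only [zero_mul, sin_zero, cos_zero, smul_eq_mul]
  field_simp
  ring

lemma waveSymbolSq_of_ne_zero (t : ℝ) {r : ℝ} (hr : r ≠ 0) :
    waveSymbolSq t r = sin (t * r) ^ 2 / r ^ 2 := by
  rw [waveSymbolSq, if_neg hr, div_pow]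

lemma sin_mul_cos_le_half (x : ℝ) : sin x * cos x ≤ 1 / 2 := by
  nlinarith [sq_nonneg (sin x - cos x), sin_sq_add_cos_sq x]

lemma div_le_integral_waveSymbolSq {T r : ℝ} (hT : 0 ≤ T) (hr : 0 ≤ r) :
    min (T ^ 3 / 12) (T / 4) / (1 + r ^ 2) ≤ ∫ t in 0..T, waveSymbolSq t r := by
  have hmin : 0 ≤ min (T ^ 3 / 12) (T / 4) := le_min (by positivity) (by positivity)
  rcases le_or_gt (T * r) 1 with hTr | hTr
  · calc min (T ^ 3 / 12) (T / 4) / (1 + r ^ 2) ≤ T ^ 3 / 12 :=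
          (div_le_self hmin (by nlinarith)).trans (min_le_left _ _)
      _ = ∫ t in 0..T, t ^ 2 / 4 := by
          rw [intervalIntegral.integral_div, integral_pow]; ring
      _ ≤ ∫ t in 0..T, waveSymbolSq t r :=
          intervalIntegral.integral_mono_on hT ((by fun_prop : Continuous _).intervalIntegrable _ _)
            ((continuous_waveSymbolSq_left r).intervalIntegrable _ _) fun t ht =>
            sq_div_four_le_waveSymbolSq ht.1 hr
              ((mul_le_mul_of_nonneg_right ht.2 hr).trans hTr)
  · have hr0 : 0 < r := by
      by_contra! h; nlinarith
    have hint : ∫ t in 0..T, waveSymbolSq t r =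
        (T * r - sin (T * r) * cos (T * r)) / (2 * r) / r ^ 2 := by
      simp only [waveSymbolSq_of_ne_zero _ hr0.ne', intervalIntegral.integral_div,
        integral_sin_mul_sq T hr0.ne']
    have hnum : T / 4 ≤ (T * r - sin (T * r) * cos (T * r)) / (2 * r) := by
      rw [le_div_iff₀ (by positivity)]
      nlinarith [sin_mul_cos_le_half (T * r)]
    rw [hint]
    calc min (T ^ 3 / 12) (T / 4) / (1 + r ^ 2) ≤ T / 4 / r ^ 2 :=
          div_le_div₀ (by positivity) (min_le_right _ _) (by positivity) (by linarith)
      _ ≤ (T * r - sin (T * r) * cos (T * r)) / (2 * r) / r ^ 2 :=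
          div_le_div_of_nonneg_right hnum (by positivity)

lemma ofReal_div_le_lintegral_waveSymbolSq {T r : ℝ} (hT : 0 ≤ T) (hr : 0 ≤ r) :
    ENNReal.ofReal (min (T ^ 3 / 12) (T / 4) / (1 + r ^ 2)) ≤
      ∫⁻ t in Ioc 0 T, ENNReal.ofReal (waveSymbolSq t r) := by
  rw [← ofReal_integral_eq_lintegral_ofReal
      ((continuous_waveSymbolSq_left r).integrableOn_Ioc)
      (Filter.Eventually.of_forall fun t => waveSymbolSq_nonneg t r),
    ← intervalIntegral.integral_of_le hT]
  exact ENNReal.ofReal_le_ofReal (div_le_integral_waveSymbolSq hT hr)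

section

variable {E : Type*} [NormedAddCommGroup E]

lemma waveSymbolSq_norm [DecidableEq E] (t : ℝ) (ξ : E) :
    waveSymbolSq t ‖ξ‖ = if ξ = 0 then t ^ 2 else (sin (t * ‖ξ‖) / ‖ξ‖) ^ 2 := by
  simp only [waveSymbolSq, norm_eq_zero]

variable [MeasurableSpace E] (μ : Measure E)

lemma lintegral_lintegral_waveSymbolSq_le (T : ℝ) :
    ∫⁻ t in Ioc 0 T, ∫⁻ ξ, ENNReal.ofReal (waveSymbolSq t ‖ξ‖) ∂μ ≤
      ENNReal.ofReal (T * (1 + T ^ 2)) * ∫⁻ ξ, ENNReal.ofReal (1 / (1 + ‖ξ‖ ^ 2)) ∂μ := by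
  set I := ∫⁻ ξ, ENNReal.ofReal (1 / (1 + ‖ξ‖ ^ 2)) ∂μ
  have hinner : ∀ t ∈ Ioc 0 T,
      ∫⁻ ξ, ENNReal.ofReal (waveSymbolSq t ‖ξ‖) ∂μ ≤ ENNReal.ofReal (1 + T ^ 2) * I := by
    rintro t ⟨ht0, htT⟩
    rw [← lintegral_const_mul' _ _ ENNReal.ofReal_ne_top]
    refine lintegral_mono fun ξ => ?_
    rw [← ENNReal.ofReal_mul (by positivity), mul_one_div]
    refine ENNReal.ofReal_le_ofReal ((waveSymbolSq_le_div t ‖ξ‖).trans ?_)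
    gcongr
  calc ∫⁻ t in Ioc 0 T, ∫⁻ ξ, ENNReal.ofReal (waveSymbolSq t ‖ξ‖) ∂μ
      ≤ ∫⁻ _ in Ioc 0 T, ENNReal.ofReal (1 + T ^ 2) * I :=
        setLIntegral_mono' measurableSet_Ioc hinner
    _ = ENNReal.ofReal (T * (1 + T ^ 2)) * I := by
      rw [setLIntegral_const, Real.volume_Ioc, sub_zero, mul_comm, ← mul_assoc,
        ← ENNReal.ofReal_mul']
      positivity

variable [OpensMeasurableSpace E]

lemma measurable_waveSymbolSq_norm :
    Measurable fun p : ℝ × E => ENNReal.ofReal (waveSymbolSq p.1 ‖p.2‖) :=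
  ENNReal.measurable_ofReal.comp
    (measurable_waveSymbolSq.comp (measurable_fst.prodMk measurable_snd.norm))

lemma le_lintegral_lintegral_waveSymbolSq_of_sFinite [SFinite μ] {T : ℝ} (hT : 0 ≤ T) :
    ENNReal.ofReal (min (T ^ 3 / 12) (T / 4)) * ∫⁻ ξ, ENNReal.ofReal (1 / (1 + ‖ξ‖ ^ 2)) ∂μ ≤
      ∫⁻ t in Ioc 0 T, ∫⁻ ξ, ENNReal.ofReal (waveSymbolSq t ‖ξ‖) ∂μ := by
  rw [lintegral_lintegral_swap (measurable_waveSymbolSq_norm).aemeasurable,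
    ← lintegral_const_mul' _ _ ENNReal.ofReal_ne_top]
  refine lintegral_mono fun ξ => ?_
  rw [← ENNReal.ofReal_mul (le_min (by positivity) (by positivity)), mul_one_div]
  exact ofReal_div_le_lintegral_waveSymbolSq hT (norm_nonneg ξ)

lemma lintegral_lintegral_waveSymbolSq_eq_top {T R : ℝ} (hT : 0 < T) (hR : 0 < R)
    (hμ : μ (Metric.closedBall 0 R) = ⊤) :
    ∫⁻ t in Ioc 0 T, ∫⁻ ξ, ENNReal.ofReal (waveSymbolSq t ‖ξ‖) ∂μ = ⊤ := by
  set s := min T R⁻¹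
  have hs : 0 < s := lt_min hT (inv_pos.2 hR)
  have hinner : ∀ t ∈ Ioc 0 s, ∫⁻ ξ, ENNReal.ofReal (waveSymbolSq t ‖ξ‖) ∂μ = ⊤ := by
    rintro t ⟨ht0, hts⟩
    have hball : Metric.closedBall 0 R ⊆
        {ξ : E | ENNReal.ofReal (t ^ 2 / 4) ≤ ENNReal.ofReal (waveSymbolSq t ‖ξ‖)} := by
      intro ξ hξ
      rw [mem_closedBall_zero_iff] at hξ
      refine ENNReal.ofReal_le_ofReal (sq_div_four_le_waveSymbolSq ht0.le (norm_nonneg ξ) ?_)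
      calc t * ‖ξ‖ ≤ R⁻¹ * R := mul_le_mul (hts.trans (min_le_right _ _)) hξ (norm_nonneg ξ)
            (by positivity)
        _ = 1 := inv_mul_cancel₀ hR.ne'
    refine top_unique ?_
    calc ⊤ = ENNReal.ofReal (t ^ 2 / 4) * μ (Metric.closedBall 0 R) := by
          rw [hμ, ENNReal.mul_top (ENNReal.ofReal_pos.2 (by positivity)).ne']
      _ ≤ ENNReal.ofReal (t ^ 2 / 4) *
          μ {ξ | ENNReal.ofReal (t ^ 2 / 4) ≤ ENNReal.ofReal (waveSymbolSq t ‖ξ‖)} := by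
          gcongr
      _ ≤ _ := mul_meas_ge_le_lintegral₀
          (measurable_waveSymbolSq_norm.comp (measurable_const.prodMk measurable_id)).aemeasurable _
  refine top_unique ?_
  calc ⊤ = ∫⁻ _ in Ioc 0 s, ⊤ := by
        rw [setLIntegral_const, Real.volume_Ioc, ENNReal.top_mul]; simpa using hs
    _ ≤ ∫⁻ t in Ioc 0 s, ∫⁻ ξ, ENNReal.ofReal (waveSymbolSq t ‖ξ‖) ∂μ :=
        setLIntegral_mono' measurableSet_Ioc fun t ht => (hinner t ht).ge
    _ ≤ _ := lintegral_mono_set (Ioc_subset_Ioc_right (min_le_left _ _))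

lemma le_lintegral_lintegral_waveSymbolSq {T : ℝ} (hT : 0 < T) :
    ENNReal.ofReal (min (T ^ 3 / 12) (T / 4)) * ∫⁻ ξ, ENNReal.ofReal (1 / (1 + ‖ξ‖ ^ 2)) ∂μ ≤
      ∫⁻ t in Ioc 0 T, ∫⁻ ξ, ENNReal.ofReal (waveSymbolSq t ‖ξ‖) ∂μ := by
  -- Tonelli needs `μ` s-finite; otherwise some ball has infinite mass and the right side is `⊤`.
  by_cases hballs : ∀ n : ℕ, μ (Metric.closedBall 0 (n + 1)) < ⊤
  · have : SigmaFinite μ := Measure.sigmaFinite_of_countable (countable_range _)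
      (forall_mem_range.2 hballs) <| sUnion_range _ ▸ eq_univ_of_forall fun ξ =>
        mem_iUnion.2 ⟨⌈‖ξ‖⌉₊, mem_closedBall_zero_iff.2 <| (Nat.le_ceil _).trans (by linarith)⟩
    exact le_lintegral_lintegral_waveSymbolSq_of_sFinite μ hT.le
  · simp only [not_forall, not_lt] at hballs
    obtain ⟨n, hn⟩ := hballs
    rw [lintegral_lintegral_waveSymbolSq_eq_top μ hT (by positivity) (top_le_iff.1 hn)]
    exact le_top

lemma lintegral_lintegral_waveSymbolSq_lt_top_iff {T : ℝ} (hT : 0 < T) :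
    ∫⁻ t in Ioc 0 T, ∫⁻ ξ, ENNReal.ofReal (waveSymbolSq t ‖ξ‖) ∂μ < ⊤ ↔
      ∫⁻ ξ, ENNReal.ofReal (1 / (1 + ‖ξ‖ ^ 2)) ∂μ < ⊤ := by
  refine ⟨fun h => ENNReal.lt_top_of_mul_ne_top_right
    ((le_lintegral_lintegral_waveSymbolSq μ hT).trans_lt h).ne ?_, fun h =>
    (lintegral_lintegral_waveSymbolSq_le μ T).trans_lt (ENNReal.mul_lt_top ENNReal.ofReal_lt_top h)⟩
  simpa using lt_min (by positivity) (by positivity)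

end

/-- Dalang's condition for the stochastic wave equation:
`∫₀^T ∫ (sin(t|ξ|)/|ξ|)² μ(dξ) dt < ∞` for some (equivalently every) `T > 0` iff
`∫ (1+|ξ|²)⁻¹ μ(dξ) < ∞`, the integrand being `t²` when `ξ = 0`. -/
theorem wave_dalang_condition (d : ℕ) (μ : Measure (EuclideanSpace ℝ (Fin d))) :
    ((∃ T : ℝ, 0 < T ∧
        ∫⁻ t in Set.Ioc (0 : ℝ) T,
          ∫⁻ ξ, ENNReal.ofReal
            (if ξ = 0 then t ^ 2 else (Real.sin (t * ‖ξ‖) / ‖ξ‖) ^ 2) ∂μ < ⊤) ↔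
      ∫⁻ ξ, ENNReal.ofReal (1 / (1 + ‖ξ‖ ^ 2)) ∂μ < ⊤) ∧
    ((∀ T : ℝ, 0 < T →
        ∫⁻ t in Set.Ioc (0 : ℝ) T,
          ∫⁻ ξ, ENNReal.ofReal
            (if ξ = 0 then t ^ 2 else (Real.sin (t * ‖ξ‖) / ‖ξ‖) ^ 2) ∂μ < ⊤) ↔
      ∫⁻ ξ, ENNReal.ofReal (1 / (1 + ‖ξ‖ ^ 2)) ∂μ < ⊤) := by
  simp only [← waveSymbolSq_norm]
  have key := fun T (hT : (0 : ℝ) < T) => lintegral_lintegral_waveSymbolSq_lt_top_iff μ hT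
  exact ⟨⟨fun ⟨T, hT, h⟩ => (key T hT).1 h, fun h => ⟨1, one_pos, (key 1 one_pos).2 h⟩⟩,
    ⟨fun h => (key 1 one_pos).1 (h 1 one_pos), fun h T hT => (key T hT).2 h⟩⟩
end
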